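/- Let ξ ∈ R^d be an ℓ2-unit vector, M, n ∈ N, and let U_1,…,U_K be all vectors with integer components and |U_k|_∞ = M. If nonnegative integers p(1),…,p(K) satisfy |Σ_{k=1}^K p(k)U_k − nξ|_∞ ≤ M, then Σ_{k=1}^K p(k)·E[T(0,U_k)] ≥ E[a_{0,n}(ξ)] − d·(M+1)·m_{ν,1}. -/

import Mathlib

open MeasureTheory ProbabilityTheory Filter Real Set

namespace FPP

/-- Vertices of the `d`-dimensional cubic lattice. -/
abbrev V (d : ℕ) := Fin d → ℤ

/-- A configuration of edge weights (indexed by unordered pairs of vertices). -/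
abbrev Cfg (d : ℕ) := Sym2 (V d) → ℝ

/-- Nearest-neighbour adjacency on `ℤ^d`. -/
def adj {d : ℕ} (x y : V d) : Prop := ∑ i, |x i - y i| = 1

/-- `*`-adjacency: distinct points at `ℓ∞`-distance one. -/
def adjStar {d : ℕ} (x y : V d) : Prop := x ≠ y ∧ ∀ i, |x i - y i| ≤ 1

/-- `e` is an edge of the lattice `ℤ^d`. -/
def IsEdge {d : ℕ} (e : Sym2 (V d)) : Prop := ∃ x y, adj x y ∧ e = s(x, y)

/-- The passage time of a path (a list of vertices). -/
def pathCost {d : ℕ} (w : Cfg d) : List (V d) → ℝ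
  | [] => 0
  | [_] => 0
  | x :: y :: rest => w s(x, y) + pathCost w (y :: rest)

/-- `γ` starts in `A` and ends in `B`. -/
def connects {d : ℕ} (γ : List (V d)) (A B : Set (V d)) : Prop :=
  (∃ a ∈ A, γ.head? = some a) ∧ (∃ b ∈ B, γ.getLast? = some b)

/-- First passage time between two sets of vertices. -/
noncomputable def fpt {d : ℕ} (w : Cfg d) (A B : Set (V d)) : ℝ :=
  sInf {t | ∃ γ : List (V d), γ.Chain' adj ∧ connects γ A B ∧ pathCost w γ = t}

/-- Point-to-point first passage time. -/
noncomputable def pt {d : ℕ} (w : Cfg d) (x y : V d) : ℝ := fpt w {x} {y}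

/-- A lattice point `[x]` within `ℓ∞`-distance `1/2` of `x ∈ ℝ^d`. -/
noncomputable def rd {d : ℕ} (x : Fin d → ℝ) : V d := fun i => round (x i)

/-- `a_{0,n}(ξ) = T(0, nξ)`. -/
noncomputable def aT {d : ℕ} (w : Cfg d) (n : ℕ) (ξ : Fin d → ℝ) : ℝ :=
  pt w 0 (rd ((n : ℝ) • ξ))

/-- `ξ` is an `ℓ2`-unit vector. -/
def unitVec {d : ℕ} (ξ : Fin d → ℝ) : Prop := ∑ i, ξ i ^ 2 = 1

/-- The open cluster of `x` in a bond configuration `η`. -/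
def openCluster {d : ℕ} (η : Sym2 (V d) → Bool) (x : V d) : Set (V d) :=
  {y | ∃ γ : List (V d), γ.Chain' (fun a b => adj a b ∧ η s(a, b) = true) ∧
        γ.head? = some x ∧ γ.getLast? = some y}

/-- `Q` is an i.i.d. Bernoulli(`p`) bond percolation measure on `ℤ^d`. -/
def BernoulliIID (d : ℕ) (Q : Measure (Sym2 (V d) → Bool)) (p : ℝ) : Prop :=
  IsProbabilityMeasure Q ∧
  (∀ e : Sym2 (V d), IsEdge e → (Q {η | η e = true}).toReal = p) ∧
  iIndepFun (fun (e : {e : Sym2 (V d) // IsEdge e}) η => η e.1) Q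

/-- The critical probability of i.i.d. bond percolation on `ℤ^d`. -/
noncomputable def pc (d : ℕ) : ℝ :=
  sSup {p : ℝ | p ∈ Icc (0 : ℝ) 1 ∧
    ∀ Q : Measure (Sym2 (V d) → Bool), BernoulliIID d Q p →
      Q {η | (openCluster η 0).Infinite} = 0}

/-- `P` makes the edge weights i.i.d. with common law `ν`. -/
def IID (d : ℕ) (P : Measure (Cfg d)) (ν : Measure ℝ) : Prop :=
  IsProbabilityMeasure P ∧
  (∀ e : Sym2 (V d), IsEdge e → P.map (fun w => w e) = ν) ∧
  iIndepFun (fun (e : {e : Sym2 (V d) // IsEdge e}) w => w e.1) P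

/-- The site `x` is unhealthy: some adjacent edge has weight `> κ⁻¹`. -/
def unhealthy {d : ℕ} (κ : ℝ) (w : Cfg d) (x : V d) : Prop :=
  ∃ y, adj x y ∧ κ⁻¹ < w s(x, y)

/-- The bad nearest-neighbour cluster `C₋(x)`: sites joined to `x` by paths all of
whose edges are bad (weight `< κ`). -/
def badCluster {d : ℕ} (κ : ℝ) (w : Cfg d) (x : V d) : Set (V d) :=
  {y | ∃ γ : List (V d), γ.Chain' (fun a b => adj a b ∧ w s(a, b) < κ) ∧
        γ.head? = some x ∧ γ.getLast? = some y}

/-- The unhealthy `*`-connected cluster `C₊(x)`. -/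
def unhealthyCluster {d : ℕ} (κ : ℝ) (w : Cfg d) (x : V d) : Set (V d) :=
  {y | ∃ γ : List (V d), γ.Chain' adjStar ∧ (∀ v ∈ γ, unhealthy κ w v) ∧
        γ.head? = some x ∧ γ.getLast? = some y}

/-- `s` has fewer than `r` vertices. -/
def smallSet {d : ℕ} (s : Set (V d)) (r : ℝ) : Prop := s.Finite ∧ (s.ncard : ℝ) < r

open Classical in
/-- The truncated weights `σ` (with cutoff `κ` and cluster-size threshold `r`). -/
noncomputable def tw {d : ℕ} (κ r : ℝ) (w : Cfg d) : Cfg d := fun e =>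
  if (κ ≤ w e ∧ w e ≤ κ⁻¹)
      ∨ (w e < κ ∧ ∃ x ∈ e, smallSet (badCluster κ w x) r)
      ∨ (κ⁻¹ < w e ∧ ∃ x ∈ e, smallSet (unhealthyCluster κ w x) r)
    then w e else 1

/-- The box `D_n(c) = c + [-3^d κ⁻¹ n^δ, 3^d κ⁻¹ n^δ]^d` (as a set of lattice points). -/
def Dbox {d : ℕ} (κ δ : ℝ) (n : ℕ) (c : Fin d → ℝ) : Set (V d) :=
  {v | ∀ i, |(v i : ℝ) - c i| ≤ 3 ^ d * κ⁻¹ * (n : ℝ) ^ δ}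

/-- `|U|_∞ = M`. -/
def linfEqM {d : ℕ} (U : V d) (M : ℕ) : Prop :=
  (∀ i, |U i| ≤ (M : ℤ)) ∧ ∃ i, |U i| = (M : ℤ)

/-- Kesten's quantity `Λ(M, n)`. -/
noncomputable def Lam {d : ℕ} (P : Measure (Cfg d)) (ξ : Fin d → ℝ) (μ : ℝ) (M n : ℕ) : ℝ :=
  sInf {t | ∃ p : V d → ℕ, (Function.support p).Finite ∧
        (∀ U, p U ≠ 0 → linfEqM U M) ∧
        (∀ i, |((∑ᶠ U, p U • U) i : ℝ) - (n : ℝ) * ξ i| ≤ (M : ℝ)) ∧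
        t = ∑ᶠ U, (p U : ℝ) * ∫ w, pt w 0 U ∂P} - (n : ℝ) * μ
/-!
With `S = ∑ p(U) U` and `r = [nξ]`, subadditivity gives `T(0, r) ≤ T(0, S) + T(S, r)`.
Walking from `0` to `S` through translates of the vectors `U`, translation invariance of
the i.i.d. law gives `E T(0, S) ≤ ∑ p(U) E T(0, U)`. Walking from `S` to `r` one coordinate
step at a time costs one edge weight per step in expectation, hence
`E T(S, r) ≤ |r - S|₁ m_{ν,1} ≤ d (M + 1) m_{ν,1}`. Measurability and integrability are
handled through the passage time `ptPos` of the weights truncated at `0`, which equals `T`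
almost surely.
-/

section Lattice

variable {d : ℕ}

lemma adj_add_right {x y : V d} (v : V d) (h : adj x y) : adj (x + v) (y + v) := by
  simpa [adj] using h

lemma adj_add_single (x : V d) (i : Fin d) {s : ℤ} (hs : |s| = 1) :
    adj x (x + Pi.single i s) := by
  simp [adj, Pi.single_apply, apply_ite, hs]

lemma reflTransGen_adj_add_single (x : V d) (i : Fin d) (k : ℤ) :
    Relation.ReflTransGen adj x (x + Pi.single i k) := by
  induction k using Int.induction_on with
  | zero => simpa using Relation.ReflTransGen.refl
  | succ k ih =>
    rw [Pi.single_add, ← add_assoc]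
    exact ih.tail (adj_add_single _ i (by simp))
  | pred k ih =>
    rw [sub_eq_add_neg, Pi.single_add, ← add_assoc]
    exact ih.tail (adj_add_single _ i (by simp))

lemma reflTransGen_adj (x y : V d) : Relation.ReflTransGen adj x y := by
  classical
  have key : ∀ s : Finset (Fin d),
      Relation.ReflTransGen adj x (x + ∑ i ∈ s, Pi.single i ((y - x) i)) := by
    intro s
    induction s using Finset.induction_on with
    | empty => simpa using Relation.ReflTransGen.refl
    | insert i s hi ih =>
      rw [Finset.sum_insert hi, add_comm (Pi.single i _), ← add_assoc]
      exact ih.trans (reflTransGen_adj_add_single _ i _)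
  simpa only [Finset.univ_sum_single, add_sub_cancel] using key Finset.univ

def Paths (x y : V d) : Set (List (V d)) :=
  {γ | γ.IsChain adj ∧ γ.head? = some x ∧ γ.getLast? = some y}

lemma Paths.nonempty (x y : V d) : (Paths x y).Nonempty := by
  obtain ⟨l, hchain, hlast⟩ :=
    List.exists_isChain_cons_of_relationReflTransGen (reflTransGen_adj x y)
  refine ⟨x :: l, hchain, rfl, ?_⟩
  rw [List.getLast?_eq_some_getLast (List.cons_ne_nil _ _), hlast]

lemma Paths.eq_cons {x y : V d} {γ : List (V d)} (h : γ ∈ Paths x y) : ∃ l, γ = x :: l :=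
  List.head?_eq_some_iff.mp h.2.1

lemma Paths.append {x y z : V d} {γ l : List (V d)} (hγ : γ ∈ Paths x y)
    (hl : y :: l ∈ Paths y z) : γ ++ l ∈ Paths x z := by
  obtain ⟨hγc, hγh, hγl⟩ := hγ
  obtain ⟨hlc, -, hll⟩ := hl
  have hne : γ ≠ [] := by rintro rfl; simp at hγh
  refine ⟨hγc.append (List.isChain_cons.mp hlc).2 ?_, ?_, ?_⟩
  · intro a ha b hb
    rw [hγl, Option.mem_some_iff] at ha
    exact ha ▸ (List.isChain_cons.mp hlc).1 b hb
  · rwa [List.head?_append_of_ne_nil _ hne]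
  · rw [List.getLast?_append, hγl]
    simpa [List.getLast?_cons] using hll

lemma Paths.map_add {x y : V d} {γ : List (V d)} (h : γ ∈ Paths x y) (v : V d) :
    γ.map (· + v) ∈ Paths (x + v) (y + v) := by
  obtain ⟨hc, hh, hl⟩ := h
  refine ⟨?_, ?_, ?_⟩
  · exact List.isChain_map_of_isChain _ (fun _ _ h => adj_add_right v h) hc
  · rw [List.head?_map, hh]; rfl
  · rw [List.getLast?_map, hl]; rfl

lemma pathCost_append {w : Cfg d} {y : V d} :
    ∀ {γ : List (V d)} (l : List (V d)), γ.getLast? = some y →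
      pathCost w (γ ++ l) = pathCost w γ + pathCost w (y :: l)
  | [], _, h => by simp at h
  | [a], l, h => by simp_all [pathCost]
  | a :: b :: γ, l, h => by
    rw [List.getLast?_cons_cons] at h
    simp only [List.cons_append, pathCost] at *
    rw [← List.cons_append, pathCost_append l h, add_assoc]

lemma pathCost_nonneg {w : Cfg d} (hw : ∀ e, IsEdge e → 0 ≤ w e) :
    ∀ {γ : List (V d)}, γ.IsChain adj → 0 ≤ pathCost w γ
  | [], _ | [_], _ => le_rfl
  | x :: y :: l, h => by
    rw [List.isChain_cons_cons] at h
    exact add_nonneg (hw _ ⟨x, y, h.1, rfl⟩) (pathCost_nonneg hw h.2)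

lemma pathCost_congr {w w' : Cfg d} (hw : ∀ e, IsEdge e → w e = w' e) :
    ∀ {γ : List (V d)}, γ.IsChain adj → pathCost w γ = pathCost w' γ
  | [], _ | [_], _ => rfl
  | x :: y :: l, h => by
    rw [List.isChain_cons_cons] at h
    simp only [pathCost, hw _ ⟨x, y, h.1, rfl⟩, pathCost_congr hw h.2]

lemma pathCost_map_add (w : Cfg d) (v : V d) :
    ∀ γ : List (V d), pathCost w (γ.map (· + v)) = pathCost (fun e => w (e.map (· + v))) γ
  | [] | [_] => rfl
  | x :: y :: l => by
    simp only [List.map_cons, pathCost, Sym2.map_mk, ← pathCost_map_add w v (y :: l)]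

lemma measurable_pathCost : ∀ γ : List (V d), Measurable fun w : Cfg d => pathCost w γ
  | [] | [_] => measurable_const
  | _ :: y :: l => (measurable_pi_apply _).add (measurable_pathCost (y :: l))

/-- `pt` with path costs truncated below at `0`: it agrees with `pt` when the weights are
nonnegative, and is measurable and subadditive for every configuration. -/
noncomputable def ptPos (w : Cfg d) (x y : V d) : ℝ :=
  ⨅ γ : Paths x y, max 0 (pathCost w γ)

lemma ptPos_nonneg (w : Cfg d) (x y : V d) : 0 ≤ ptPos w x y :=
  Real.iInf_nonneg fun _ => le_max_left _ _

lemma ptPos_le {x y : V d} {γ : List (V d)} (hγ : γ ∈ Paths x y) (w : Cfg d) :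
    ptPos w x y ≤ max 0 (pathCost w γ) :=
  ciInf_le ⟨0, by rintro _ ⟨γ, rfl⟩; exact le_max_left _ _⟩ (⟨γ, hγ⟩ : Paths x y)

lemma ptPos_self (w : Cfg d) (x : V d) : ptPos w x x = 0 :=
  le_antisymm (by simpa [pathCost] using ptPos_le (γ := [x]) ⟨.singleton x, rfl, rfl⟩ w)
    (ptPos_nonneg w x x)

lemma ptPos_le_of_adj {x y : V d} (h : adj x y) (w : Cfg d) :
    ptPos w x y ≤ max 0 (w s(x, y)) := by
  simpa [pathCost] using ptPos_le (γ := [x, y]) ⟨List.isChain_pair.mpr h, rfl, rfl⟩ w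

lemma ptPos_triangle (w : Cfg d) (x y z : V d) : ptPos w x z ≤ ptPos w x y + ptPos w y z := by
  have := (Paths.nonempty x y).to_subtype
  have := (Paths.nonempty y z).to_subtype
  refine le_ciInf_add_ciInf fun γ₁ γ₂ => ?_
  obtain ⟨l, hl⟩ := Paths.eq_cons γ₂.2
  have hγ₂ := γ₂.2
  rw [hl] at hγ₂ ⊢
  refine (ptPos_le (Paths.append γ₁.2 hγ₂) w).trans ?_
  rw [pathCost_append l γ₁.2.2.2]
  exact max_le (by positivity) (add_le_add (le_max_right _ _) (le_max_right _ _))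

lemma ptPos_congr {w w' : Cfg d} (hw : ∀ e, IsEdge e → w e = w' e) (x y : V d) :
    ptPos w x y = ptPos w' x y :=
  iInf_congr fun γ => by rw [pathCost_congr hw γ.2.1]

lemma ptPos_comp_map_add (w : Cfg d) (v x y : V d) :
    ptPos (fun e => w (e.map (· + v))) x y = ptPos w (x + v) (y + v) := by
  let φ : Paths x y → Paths (x + v) (y + v) := fun γ => ⟨_, Paths.map_add γ.2 v⟩
  have hφ : φ.Surjective := fun γ => by
    refine ⟨⟨γ.1.map (· + -v), by simpa using Paths.map_add γ.2 (-v)⟩, Subtype.ext ?_⟩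
    simp [φ, List.map_map, Function.comp_def]
  simp only [ptPos, ← hφ.iInf_comp, φ, pathCost_map_add]

lemma measurable_ptPos (x y : V d) : Measurable fun w : Cfg d => ptPos w x y :=
  Measurable.iInf fun γ => measurable_const.max (measurable_pathCost γ.1)

lemma pt_eq_ptPos {w : Cfg d} (hw : ∀ e, IsEdge e → 0 ≤ w e) (x y : V d) :
    pt w x y = ptPos w x y := by
  rw [pt, fpt, ptPos, iInf]
  congr 1
  ext t
  simp only [connects, mem_singleton_iff, exists_eq_left, mem_range, Subtype.exists, Paths]
  refine exists_congr fun γ => ⟨fun ⟨hc, hxy, ht⟩ => ⟨⟨hc, hxy⟩, ?_⟩,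
    fun ⟨⟨hc, hxy⟩, ht⟩ => ⟨hc, hxy, ?_⟩⟩
  · rw [max_eq_right (pathCost_nonneg hw hc), ht]
  · rwa [max_eq_right (pathCost_nonneg hw hc)] at ht

end Lattice

section Subadditive

variable {G ι : Type*} [AddCommMonoid G] {f : G → G → ℝ}

theorem le_nsmul_of_subadditive (hself : ∀ a, f a a = 0)
    (htri : ∀ a b c, f a c ≤ f a b + f b c) (hadd : ∀ a u, f a (a + u) = f 0 u)
    (k : ℕ) (a u : G) : f a (a + k • u) ≤ k * f 0 u := by
  induction k generalizing a with
  | zero => simp [hself]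
  | succ k ih =>
    calc f a (a + (k + 1) • u) ≤ f a (a + u) + f (a + u) (a + u + k • u) := by
          rw [add_assoc, ← succ_nsmul']; exact htri _ _ _
      _ ≤ f 0 u + k * f 0 u := by rw [hadd]; exact add_le_add le_rfl (ih _)
      _ = (k + 1 : ℕ) * f 0 u := by push_cast; ring

theorem le_sum_of_subadditive (hself : ∀ a, f a a = 0)
    (htri : ∀ a b c, f a c ≤ f a b + f b c) (hadd : ∀ a u, f a (a + u) = f 0 u)
    (s : Finset ι) (k : ι → ℕ) (u : ι → G) (a : G) :
    f a (a + ∑ i ∈ s, k i • u i) ≤ ∑ i ∈ s, (k i : ℝ) * f 0 (u i) := by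
  classical
  induction s using Finset.induction_on generalizing a with
  | empty => simp [hself]
  | insert j s hj ih =>
    rw [Finset.sum_insert hj, Finset.sum_insert hj, ← add_assoc]
    exact (htri _ _ _).trans
      (add_le_add (le_nsmul_of_subadditive hself htri hadd _ _ _) (ih _))

theorem le_finsum_of_subadditive (hself : ∀ a, f a a = 0)
    (htri : ∀ a b c, f a c ≤ f a b + f b c) (hadd : ∀ a u, f a (a + u) = f 0 u)
    {k : ι → ℕ} (hk : (Function.support k).Finite) (u : ι → G) (a : G) :
    f a (a + ∑ᶠ i, k i • u i) ≤ ∑ᶠ i, (k i : ℝ) * f 0 (u i) := by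
  have hG : Function.support (fun i => k i • u i) ⊆ hk.toFinset := fun i hi => by
    simpa using mt (fun h : k i = 0 => by simp [h]) hi
  have hR : Function.support (fun i => (k i : ℝ) * f 0 (u i)) ⊆ hk.toFinset := fun i hi => by
    simpa using mt (fun h : k i = 0 => by simp [h]) hi
  rw [finsum_eq_sum_of_support_subset _ hG, finsum_eq_sum_of_support_subset _ hR]
  exact le_sum_of_subadditive hself htri hadd _ _ _ _

end Subadditive

section Expectation

variable {d : ℕ} {P : Measure (Cfg d)} {ν : Measure ℝ}

abbrev Edge (d : ℕ) := {e : Sym2 (V d) // IsEdge e}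

lemma IsEdge.map_add {e : Sym2 (V d)} (he : IsEdge e) (v : V d) : IsEdge (e.map (· + v)) := by
  obtain ⟨x, y, h, rfl⟩ := he
  exact ⟨x + v, y + v, adj_add_right v h, rfl⟩

open Classical in
noncomputable def extendEdges (u : Edge d → ℝ) : Cfg d :=
  fun e => if h : IsEdge e then u ⟨e, h⟩ else 0

lemma measurable_extendEdges : Measurable (extendEdges (d := d)) := by
  refine measurable_pi_lambda _ fun e => ?_
  by_cases he : IsEdge e
  · simpa [extendEdges, he] using measurable_pi_apply (⟨e, he⟩ : Edge d)
  · simp [extendEdges, he]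

lemma ae_nonneg_of_measure_Iio_eq_zero (hν : ν (Iio 0) = 0) : ∀ᵐ t ∂ν, 0 ≤ t := by
  rw [ae_iff]
  simp only [not_le]
  exact hν

namespace IID

theorem map_comp_injective (hP : IID d P ν) {g : Edge d → Edge d} (hg : g.Injective) :
    P.map (fun w (e : Edge d) => w (g e)) = P.map (fun w (e : Edge d) => w e) := by
  have := hP.1
  rw [(hP.2.2.precomp hg).map_fun_eq_infinitePi_map (fun _ => measurable_pi_apply _),
    hP.2.2.map_fun_eq_infinitePi_map (fun _ => measurable_pi_apply _)]
  congr 1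
  funext e
  rw [hP.2.1 _ (g e).2, hP.2.1 _ e.2]

theorem ae_nonneg (hP : IID d P ν) (hν : ν (Iio 0) = 0) :
    ∀ᵐ w ∂P, ∀ e, IsEdge e → 0 ≤ w e := by
  have hedge : ∀ e : Edge d, ∀ᵐ w ∂P, 0 ≤ w e := fun e =>
    ae_of_ae_map (measurable_pi_apply _).aemeasurable
      (by rw [hP.2.1 _ e.2]; exact ae_nonneg_of_measure_Iio_eq_zero hν)
  filter_upwards [ae_all_iff.mpr hedge] with w hw e he
  exact hw ⟨e, he⟩

theorem integrable_apply (hP : IID d P ν) (hm1 : Integrable (fun t : ℝ => t) ν)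
    {e : Sym2 (V d)} (he : IsEdge e) : Integrable (fun w : Cfg d => w e) P := by
  rw [← hP.2.1 e he] at hm1
  exact (integrable_map_measure hm1.aestronglyMeasurable
    (measurable_pi_apply e).aemeasurable).mp hm1

theorem integral_apply (hP : IID d P ν) {e : Sym2 (V d)} (he : IsEdge e) :
    ∫ w, w e ∂P = ∫ t, t ∂ν := by
  rw [← hP.2.1 e he]
  exact (integral_map (φ := fun w : Cfg d => w e) (f := fun t => t)
    (measurable_pi_apply e).aemeasurable measurable_id.aestronglyMeasurable).symm

theorem integrable_pathCost (hP : IID d P ν) (hm1 : Integrable (fun t : ℝ => t) ν) :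
    ∀ {γ : List (V d)}, γ.IsChain adj → Integrable (fun w => pathCost w γ) P
  | [], _ | [_], _ => integrable_zero _ _ _
  | x :: y :: l, h => by
    rw [List.isChain_cons_cons] at h
    exact (hP.integrable_apply hm1 ⟨x, y, h.1, rfl⟩).add (hP.integrable_pathCost hm1 h.2)

theorem integrable_ptPos (hP : IID d P ν) (hm1 : Integrable (fun t : ℝ => t) ν) (x y : V d) :
    Integrable (fun w => ptPos w x y) P := by
  obtain ⟨γ, hγ⟩ := Paths.nonempty x y
  refine (hP.integrable_pathCost hm1 hγ.1).norm.mono'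
    (measurable_ptPos x y).aestronglyMeasurable (.of_forall fun w => ?_)
  rw [Real.norm_of_nonneg (ptPos_nonneg w x y), Real.norm_eq_abs]
  exact (ptPos_le hγ w).trans (max_le (abs_nonneg _) (le_abs_self _))

theorem integral_ptPos_triangle (hP : IID d P ν) (hm1 : Integrable (fun t : ℝ => t) ν)
    (x y z : V d) :
    ∫ w, ptPos w x z ∂P ≤ ∫ w, ptPos w x y ∂P + ∫ w, ptPos w y z ∂P := by
  rw [← integral_add (hP.integrable_ptPos hm1 x y) (hP.integrable_ptPos hm1 y z)]
  exact integral_mono (hP.integrable_ptPos hm1 x z)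
    ((hP.integrable_ptPos hm1 x y).add (hP.integrable_ptPos hm1 y z))
    fun w => ptPos_triangle w x y z

/-- The law of the weights seen by `ptPos` is that of an i.i.d. family on the edges, and
translations permute the edges injectively. -/
theorem integral_ptPos_add (hP : IID d P ν) (v x y : V d) :
    ∫ w, ptPos w (x + v) (y + v) ∂P = ∫ w, ptPos w x y ∂P := by
  let F : (Edge d → ℝ) → ℝ := fun u => ptPos (extendEdges u) x y
  have hF : Measurable F := (measurable_ptPos x y).comp measurable_extendEdges
  let τ : Edge d → Edge d := fun e => ⟨e.1.map (· + v), e.2.map_add v⟩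
  have hτ : τ.Injective := fun a b h =>
    Subtype.ext (Sym2.map.injective (add_left_injective v) (congrArg Subtype.val h))
  have hshift : ∀ w, ptPos w (x + v) (y + v) = F fun e => w (τ e) := fun w => by
    rw [← ptPos_comp_map_add]
    exact ptPos_congr (fun e he => by simp [extendEdges, he, τ]) x y
  have hid : ∀ w, ptPos w x y = F fun e => w e := fun w =>
    ptPos_congr (fun e he => by simp [extendEdges, he]) x y
  simp_rw [hshift, hid]
  have hmeas : ∀ g : Edge d → Edge d, AEMeasurable (fun (w : Cfg d) e => w (g e)) P :=
    fun g => (measurable_pi_lambda _ fun e => measurable_pi_apply _).aemeasurable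
  rw [← integral_map (hmeas τ) hF.aestronglyMeasurable, hP.map_comp_injective hτ]
  exact integral_map (hmeas id) hF.aestronglyMeasurable

theorem integral_ptPos_le_finsum (hP : IID d P ν) (hm1 : Integrable (fun t : ℝ => t) ν)
    {ι : Type*} {k : ι → ℕ} (hk : (Function.support k).Finite) (u : ι → V d) (a : V d) :
    ∫ w, ptPos w a (a + ∑ᶠ i, k i • u i) ∂P ≤
      ∑ᶠ i, (k i : ℝ) * ∫ w, ptPos w 0 (u i) ∂P :=
  le_finsum_of_subadditive (f := fun x y => ∫ w, ptPos w x y ∂P) (by simp [ptPos_self])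
    (hP.integral_ptPos_triangle hm1)
    (fun a u => by rw [add_comm a u]; simpa using hP.integral_ptPos_add a 0 u)
    hk u a

theorem integral_ptPos_le_of_adj (hP : IID d P ν) (hm1 : Integrable (fun t : ℝ => t) ν)
    (hν : ν (Iio 0) = 0) {x y : V d} (h : adj x y) :
    ∫ w, ptPos w x y ∂P ≤ ∫ t, t ∂ν := by
  have he : IsEdge s(x, y) := ⟨x, y, h, rfl⟩
  rw [← hP.integral_apply he]
  refine integral_mono_ae (hP.integrable_ptPos hm1 x y) (hP.integrable_apply hm1 he) ?_
  filter_upwards [hP.ae_nonneg hν] with w hw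
  simpa [max_eq_right (hw _ he)] using ptPos_le_of_adj h w

theorem integral_ptPos_le_dist (hP : IID d P ν) (hm1 : Integrable (fun t : ℝ => t) ν)
    (hν : ν (Iio 0) = 0) (x y : V d) :
    ∫ w, ptPos w x y ∂P ≤ (∑ i, (|y i - x i| : ℝ)) * ∫ t, t ∂ν := by
  set δ := y - x
  have hδ : y = x + ∑ i, (δ i).natAbs • Pi.single i (δ i).sign := by
    funext j
    simp [Finset.sum_apply, Pi.single_apply, δ, mul_comm |y j - x j|, Int.sign_mul_abs]
  have hstep : ∀ i, ((δ i).natAbs : ℝ) * ∫ w, ptPos w 0 (Pi.single i (δ i).sign) ∂P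
      ≤ (δ i).natAbs * ∫ t, t ∂ν := by
    intro i
    rcases eq_or_ne (δ i) 0 with h0 | h0
    · simp [h0]
    · refine mul_le_mul_of_nonneg_left (hP.integral_ptPos_le_of_adj hm1 hν ?_) (by positivity)
      simpa using adj_add_single 0 i (Int.abs_sign_of_ne_zero h0)
  calc ∫ w, ptPos w x y ∂P
      ≤ ∑ i, ((δ i).natAbs : ℝ) * ∫ w, ptPos w 0 (Pi.single i (δ i).sign) ∂P := by
        conv_lhs => rw [hδ, ← finsum_eq_sum_of_fintype]
        rw [← finsum_eq_sum_of_fintype]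
        exact hP.integral_ptPos_le_finsum hm1 (Set.toFinite _) _ x
    _ ≤ ∑ i, ((δ i).natAbs : ℝ) * ∫ t, t ∂ν := Finset.sum_le_sum fun i _ => hstep i
    _ = _ := by simp [Finset.sum_mul, δ]

end IID

end Expectation

theorem statement11_general (d : ℕ)
    (ν : Measure ℝ) (hνpos : ν (Set.Iio 0) = 0)
    (hm1 : Integrable (fun t : ℝ => t) ν)
    (P : Measure (Cfg d)) (hP : IID d P ν)
    (ξ : Fin d → ℝ) (M n : ℕ)
    (p : V d → ℕ) (hfin : (Function.support p).Finite)
    (hclose : ∀ i, |(((∑ᶠ U, p U • U) i : ℤ) : ℝ) - (n : ℝ) * ξ i| ≤ (M : ℝ)) :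
    (∫ w, aT w n ξ ∂P) - (d : ℝ) * ((M : ℝ) + 1) * (∫ t, t ∂ν) ≤
      ∑ᶠ U, (p U : ℝ) * ∫ w, pt w 0 U ∂P := by
  set S := ∑ᶠ U, p U • U
  set r := rd ((n : ℝ) • ξ)
  have hpt : ∀ x y, ∫ w, pt w x y ∂P = ∫ w, ptPos w x y ∂P := fun x y =>
    integral_congr_ae ((hP.ae_nonneg hνpos).mono fun w hw => pt_eq_ptPos hw x y)
  have hcoord : ∀ i, (|r i - S i| : ℝ) ≤ M + 1 := fun i => by
    have hr : |(r i : ℝ) - n * ξ i| ≤ 1 / 2 := by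
      simpa [r, rd, abs_sub_comm] using abs_sub_round ((n : ℝ) * ξ i)
    have hS : |n * ξ i - (S i : ℝ)| ≤ M := by rw [abs_sub_comm]; exact hclose i
    linarith [abs_sub_le (r i : ℝ) (n * ξ i) (S i)]
  have hdist : ∑ i, (|r i - S i| : ℝ) ≤ d * (M + 1) :=
    (Finset.sum_le_card_nsmul _ _ _ fun i _ => hcoord i).trans_eq (by simp [mul_add])
  have hm1_nonneg : 0 ≤ ∫ t, t ∂ν :=
    integral_nonneg_of_ae (ae_nonneg_of_measure_Iio_eq_zero hνpos)
  have hsum : ∫ w, ptPos w 0 S ∂P ≤ ∑ᶠ U, (p U : ℝ) * ∫ w, ptPos w 0 U ∂P := by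
    simpa only [zero_add] using hP.integral_ptPos_le_finsum hm1 hfin (fun U => U) 0
  have hlast : ∫ w, ptPos w S r ∂P ≤ d * (M + 1) * ∫ t, t ∂ν :=
    (hP.integral_ptPos_le_dist hm1 hνpos S r).trans (mul_le_mul_of_nonneg_right hdist hm1_nonneg)
  simp only [aT, hpt]
  linarith [hP.integral_ptPos_triangle hm1 0 S r]

/-- subadditivity step in the proof of Theorem 1.1: if nonnegative
integers `p(1),…,p(K)` satisfy `|Σ_k p(k) U_k − nξ|_∞ ≤ M`, then
`Σ_k p(k) E[T(0,U_k)] ≥ E[a_{0,n}(ξ)] − d (M+1) m_{ν,1}`. -/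
theorem statement11 (d : ℕ) (hd : 2 ≤ d)
    (ν : Measure ℝ) (hνprob : IsProbabilityMeasure ν) (hνpos : ν (Set.Iio 0) = 0)
    (hm1 : Integrable (fun t : ℝ => t) ν)
    (P : Measure (Cfg d)) (hP : IID d P ν)
    (ξ : Fin d → ℝ) (hξ : unitVec ξ) (M n : ℕ)
    (p : V d → ℕ) (hfin : (Function.support p).Finite)
    (hsupp : ∀ U, p U ≠ 0 → linfEqM U M)
    (hclose : ∀ i, |(((∑ᶠ U, p U • U) i : ℤ) : ℝ) - (n : ℝ) * ξ i| ≤ (M : ℝ)) :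
    (∫ w, aT w n ξ ∂P) - (d : ℝ) * ((M : ℝ) + 1) * (∫ t, t ∂ν) ≤
      ∑ᶠ U, (p U : ℝ) * ∫ w, pt w 0 U ∂P :=
  statement11_general d ν hνpos hm1 P hP ξ M n p hfin hclose

end FPP
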